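/- arXiv:1601.00292 — 5 statements merged into one kernel-verified Lean document; each statement's English description precedes it below -/
import Mathlib

section
/- Let β : ℂ^{m×n} × ℂ^n → ℂ^m be the matrix-vector product bilinear map (A, x) ↦ Ax. Then the rank of its structure tensor μ_β equals mn. -/
open Filter Topology

/-- `HasTensorRankLE 𝕜 β r` means that the bilinear operation `β` admits a decomposition
into `r` rank-one terms, i.e., the structure tensor `μ_β ∈ U* ⊗ V* ⊗ W` of `β` can be
written as `∑ i, f i ⊗ g i ⊗ w i` with `r` summands; equivalently `rank (μ_β) ≤ r`. -/
def HasTensorRankLE (𝕜 : Type*) [Field 𝕜] {U V W : Type*}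
    [AddCommGroup U] [Module 𝕜 U] [AddCommGroup V] [Module 𝕜 V]
    [AddCommGroup W] [Module 𝕜 W] (β : U → V → W) (r : ℕ) : Prop :=
  ∃ (f : Fin r → (U →ₗ[𝕜] 𝕜)) (g : Fin r → (V →ₗ[𝕜] 𝕜)) (w : Fin r → W),
    ∀ u v, β u v = ∑ i, (f i u * g i v) • w i

/-- The rank of the structure tensor `μ_β` of a bilinear operation `β`. -/
noncomputable def tensorRank (𝕜 : Type*) [Field 𝕜] {U V W : Type*}
    [AddCommGroup U] [Module 𝕜 U] [AddCommGroup V] [Module 𝕜 V]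
    [AddCommGroup W] [Module 𝕜 W] (β : U → V → W) : ℕ :=
  sInf {r | HasTensorRankLE 𝕜 β r}

/-- The border rank of the structure tensor `μ_β` of a bilinear operation `β` : the least `r`
such that `μ_β` is a limit of a sequence of tensors of rank at most `r` (convergence of the
tensors in the finite-dimensional space `U* ⊗ V* ⊗ W` being equivalent to pointwise
convergence of the corresponding bilinear maps). -/
noncomputable def borderRank (𝕜 : Type*) [Field 𝕜] {U V W : Type*}
    [AddCommGroup U] [Module 𝕜 U] [AddCommGroup V] [Module 𝕜 V]
    [AddCommGroup W] [Module 𝕜 W] [TopologicalSpace W] (β : U → V → W) : ℕ :=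
  sInf {r | ∃ s : ℕ → (U → V → W), (∀ m, HasTensorRankLE 𝕜 (s m) r) ∧
    ∀ u v, Tendsto (fun m => s m u v) atTop (𝓝 (β u v))}

/-! The decomposition `A x = ∑ᵢⱼ (Aᵢⱼ xⱼ) eᵢ` gives rank at most `mn`. Conversely, from a
decomposition `β u v = ∑ₖ (fₖ u)(gₖ v) wₖ` with `r` terms, the forms `fₖ` separate points of the
space of matrices, since a matrix killing every vector is zero; hence `mn ≤ r`. -/

section

variable {𝕜 : Type*} [Field 𝕜] {U V W : Type*}
  [AddCommGroup U] [Module 𝕜 U] [AddCommGroup V] [Module 𝕜 V] [AddCommGroup W] [Module 𝕜 W]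

theorem HasTensorRankLE.of_sum {ι : Type*} [Fintype ι] {β : U → V → W}
    (f : ι → U →ₗ[𝕜] 𝕜) (g : ι → V →ₗ[𝕜] 𝕜) (w : ι → W)
    (hβ : ∀ u v, β u v = ∑ i, (f i u * g i v) • w i) :
    HasTensorRankLE 𝕜 β (Fintype.card ι) := by
  let e := (Fintype.equivFin ι).symm
  refine ⟨fun k => f (e k), fun k => g (e k), fun k => w (e k), fun u v => ?_⟩
  rw [hβ, ← e.sum_comp]

theorem HasTensorRankLE.finrank_le {β : U → V → W} {r : ℕ} (h : HasTensorRankLE 𝕜 β r)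
    (hβ : ∀ u, (∀ v, β u v = 0) → u = 0) :
    Module.finrank 𝕜 U ≤ r := by
  obtain ⟨f, g, w, hfgw⟩ := h
  have hinj : Function.Injective (LinearMap.pi f) := by
    rw [← LinearMap.ker_eq_bot, LinearMap.ker_eq_bot']
    intro u hu
    have hf : ∀ k, f k u = 0 := fun k => congrFun hu k
    exact hβ u fun v => by simp [hfgw, hf]
  simpa using LinearMap.finrank_le_finrank_of_injective hinj

end

theorem Matrix.hasTensorRankLE_mulVec (𝕜 : Type*) [Field 𝕜] (m n : Type*) [Fintype m]
    [Fintype n] [DecidableEq m] :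
    HasTensorRankLE 𝕜 (fun (A : Matrix m n 𝕜) (x : n → 𝕜) => A.mulVec x)
      (Fintype.card m * Fintype.card n) := by
  rw [← Fintype.card_prod]
  refine .of_sum (fun p => entryLinearMap 𝕜 𝕜 p.1 p.2) (fun p => LinearMap.proj p.2)
    (fun p => Pi.single p.1 1) fun A x => ?_
  ext i
  simp [Fintype.sum_prod_type, Matrix.mulVec, dotProduct, Pi.single_apply]

/-- The structure tensor of the matrix-vector product
`ℂ^{m×n} × ℂ^n → ℂ^m`, `(A, x) ↦ Ax`, has rank `mn`. -/
theorem tensorRank_mulVec (m n : ℕ) :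
    tensorRank ℂ (fun (A : Matrix (Fin m) (Fin n) ℂ) (x : Fin n → ℂ) => A.mulVec x) = m * n := by
  refine IsLeast.csInf_eq ⟨by simpa using Matrix.hasTensorRankLE_mulVec ℂ (Fin m) (Fin n),
    fun r hr => ?_⟩
  simpa [Module.finrank_matrix] using hr.finrank_le fun A hA => Matrix.mulVec_injective <|
    funext fun x => (hA x).trans (Matrix.zero_mulVec x).symm
end

section
/- Let Ω ⊆ {1,…,m} × {1,…,n} be a sparsity pattern and let ℂ^{m×n}_Ω = {A ∈ ℂ^{m×n} : a_{ij} = 0 for all (i,j) ∉ Ω} be the space of matrices with sparsity pattern Ω. Let β_Ω : ℂ^{m×n}_Ω × ℂ^n → ℂ^m, (A, x) ↦ Ax, with structure tensor μ_Ω. Then both the rank and the border rank of μ_Ω equal #Ω, the cardinality of Ω. -/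
open Filter Topology

/-- The space `ℂ^{m×n}_Ω` of complex `m × n` matrices with sparsity pattern `Ω`, i.e. whose
entries vanish outside of `Ω`. -/
noncomputable def sparseMatrixSpace (m n : ℕ) (Ω : Finset (Fin m × Fin n)) :
    Submodule ℂ (Matrix (Fin m) (Fin n) ℂ) where
  carrier := {A | ∀ i j, (i, j) ∉ Ω → A i j = 0}
  add_mem' := by
    intro A B hA hB i j h
    simp [Matrix.add_apply, hA i j h, hB i j h]
  zero_mem' := by intro i j _; simp
  smul_mem' := by
    intro c A hA i j h
    simp [Matrix.smul_apply, hA i j h]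

/-!
Writing `A *ᵥ x = ∑_{(i,j) ∈ Ω} A i j • x j • eᵢ` shows that the rank is at most `#Ω`.
Conversely, evaluate a bilinear map `τ` at the pairs (matrix unit `E_q`, basis vector `e_{j_p}`)
and read off coordinate `i_p`, for `p = (i_p, j_p)` and `q` in `Ω`. The resulting `Ω × Ω` matrix
is the identity for the sparse product, while for `τ` of rank `≤ r` it factors through `𝕜^r`.
So its determinant vanishes when `r < #Ω`, and since the determinant is continuous this persists
under pointwise limits, bounding the border rank as well.
-/

open Matrix

section TensorRank

variable {𝕜 U V W : Type*} [Field 𝕜] [AddCommGroup U] [Module 𝕜 U] [AddCommGroup V] [Module 𝕜 V]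
  [AddCommGroup W] [Module 𝕜 W]

theorem hasTensorRankLE_card {ι : Type*} [Fintype ι] {β : U → V → W}
    (f : ι → U →ₗ[𝕜] 𝕜) (g : ι → V →ₗ[𝕜] 𝕜) (w : ι → W)
    (h : ∀ u v, β u v = ∑ i, (f i u * g i v) • w i) :
    HasTensorRankLE 𝕜 β (Fintype.card ι) := by
  let e := (Fintype.equivFin ι).symm
  refine ⟨f ∘ e, g ∘ e, w ∘ e, fun u v => ?_⟩
  rw [h, ← e.sum_comp]
  rfl

theorem HasTensorRankLE.tensorRank_le {β : U → V → W} {r : ℕ} (h : HasTensorRankLE 𝕜 β r) :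
    tensorRank 𝕜 β ≤ r :=
  Nat.sInf_le h

theorem HasTensorRankLE.borderRank_le [TopologicalSpace W] {β : U → V → W} {r : ℕ}
    (h : HasTensorRankLE 𝕜 β r) : borderRank 𝕜 β ≤ r :=
  Nat.sInf_le ⟨fun _ => β, fun _ => h, fun _ _ => tendsto_const_nhds⟩

theorem borderRank_le_tensorRank [TopologicalSpace W] {β : U → V → W} {r : ℕ}
    (h : HasTensorRankLE 𝕜 β r) : borderRank 𝕜 β ≤ tensorRank 𝕜 β :=
  HasTensorRankLE.borderRank_le (Nat.sInf_mem (⟨r, h⟩ : {r | HasTensorRankLE 𝕜 β r}.Nonempty))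

/-- A square submatrix of a flattening of the structure tensor of `τ`, so its rank is a lower
bound for the tensor rank. -/
def evalMatrix {ι : Type*} (τ : U → V → W) (u : ι → U) (v : ι → V) (φ : ι → W →ₗ[𝕜] 𝕜) :
    Matrix ι ι 𝕜 :=
  Matrix.of fun p q => φ p (τ (u q) (v p))

variable {ι : Type*} [Fintype ι] {u : ι → U} {v : ι → V} {φ : ι → W →ₗ[𝕜] 𝕜}

theorem HasTensorRankLE.rank_evalMatrix_le {τ : U → V → W} {r : ℕ}
    (h : HasTensorRankLE 𝕜 τ r) : (evalMatrix τ u v φ).rank ≤ r := by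
  obtain ⟨f, g, w, hτ⟩ := h
  have hfactor : evalMatrix τ u v φ =
      Matrix.of (fun p k => g k (v p) * φ p (w k)) * Matrix.of (fun k q => f k (u q)) := by
    ext p q
    simp only [evalMatrix, hτ, map_sum, map_smul, smul_eq_mul, of_apply, mul_apply]
    exact Finset.sum_congr rfl fun k _ => by ring
  rw [hfactor]
  exact (rank_mul_le_left _ _).trans ((rank_le_card_width _).trans_eq (Fintype.card_fin r))

theorem HasTensorRankLE.det_evalMatrix_eq_zero [DecidableEq ι] {τ : U → V → W} {r : ℕ}
    (h : HasTensorRankLE 𝕜 τ r) (hr : r < Fintype.card ι) : (evalMatrix τ u v φ).det = 0 := by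
  by_contra hdet
  have hrank := rank_of_isUnit _ ((isUnit_iff_isUnit_det _).mpr (isUnit_iff_ne_zero.mpr hdet))
  have := h.rank_evalMatrix_le (u := u) (v := v) (φ := φ)
  omega

theorem card_le_borderRank_of_det_evalMatrix_ne_zero [DecidableEq ι] [TopologicalSpace 𝕜]
    [IsTopologicalRing 𝕜] [T2Space 𝕜] [TopologicalSpace W] (hφ : ∀ p, Continuous (φ p))
    {β : U → V → W} {r : ℕ}
    (hβ : HasTensorRankLE 𝕜 β r) (hdet : (evalMatrix β u v φ).det ≠ 0) :
    Fintype.card ι ≤ borderRank 𝕜 β := by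
  refine le_csInf ⟨r, fun _ => β, fun _ => hβ, fun _ _ => tendsto_const_nhds⟩ ?_
  rintro k ⟨s, hs, hlim⟩
  by_contra! hk
  have hconv : Tendsto (fun l => evalMatrix (s l) u v φ) atTop (𝓝 (evalMatrix β u v φ)) :=
    tendsto_pi_nhds.mpr fun p => tendsto_pi_nhds.mpr fun q =>
      ((hφ p).tendsto _).comp (hlim (u q) (v p))
  have hdet_lim := ((continuous_id.matrix_det).tendsto _).comp hconv
  simp only [Function.comp_def, id, (hs _).det_evalMatrix_eq_zero hk] at hdet_lim
  exact hdet (tendsto_nhds_unique hdet_lim tendsto_const_nhds)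

end TensorRank

section SparseMulVec

variable {m n : ℕ} {Ω : Finset (Fin m × Fin n)}

theorem single_mem_sparseMatrixSpace {p : Fin m × Fin n} (hp : p ∈ Ω) (c : ℂ) :
    Matrix.single p.1 p.2 c ∈ sparseMatrixSpace m n Ω := fun i j hij =>
  single_apply_of_ne _ _ _ _ _ fun h => hij (by rwa [← h.1, ← h.2])

theorem mulVec_eq_sum_of_mem_sparseMatrixSpace {A : Matrix (Fin m) (Fin n) ℂ}
    (hA : A ∈ sparseMatrixSpace m n Ω) (x : Fin n → ℂ) :
    A *ᵥ x = ∑ p : Ω, (A p.1.1 p.1.2 * x p.1.2) • Pi.single p.1.1 1 := by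
  ext i
  simp only [Finset.sum_apply, Pi.smul_apply, smul_eq_mul]
  rw [Finset.sum_coe_sort Ω fun p => A p.1 p.2 * x p.2 * (Pi.single p.1 (1 : ℂ) : Fin m → ℂ) i,
    Finset.sum_subset (Finset.subset_univ Ω) fun p _ hp => by
      rw [hA p.1 p.2 hp, zero_mul, zero_mul],
    Fintype.sum_prod_type, Finset.sum_comm]
  simp [mulVec, dotProduct, Pi.single_apply]

theorem hasTensorRankLE_sparse_mulVec :
    HasTensorRankLE ℂ (fun (A : sparseMatrixSpace m n Ω) (x : Fin n → ℂ) =>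
      (A : Matrix (Fin m) (Fin n) ℂ) *ᵥ x) Ω.card := by
  rw [← Fintype.card_coe Ω]
  exact hasTensorRankLE_card
    (fun p => entryLinearMap ℂ ℂ p.1.1 p.1.2 ∘ₗ (sparseMatrixSpace m n Ω).subtype)
    (fun p => LinearMap.proj p.1.2) (fun p => Pi.single p.1.1 1)
    fun A x => mulVec_eq_sum_of_mem_sparseMatrixSpace A.2 x

theorem evalMatrix_sparse_mulVec_eq_one :
    evalMatrix (fun (A : sparseMatrixSpace m n Ω) (x : Fin n → ℂ) =>
        (A : Matrix (Fin m) (Fin n) ℂ) *ᵥ x)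
      (fun q : Ω => ⟨Matrix.single q.1.1 q.1.2 1, single_mem_sparseMatrixSpace q.2 1⟩)
      (fun p => Pi.single p.1.2 1) (fun p => LinearMap.proj p.1.1) = 1 := by
  ext p q
  simp only [evalMatrix, of_apply, LinearMap.proj_apply, mulVec_single_one, col_apply,
    single_apply, one_apply, Subtype.ext_iff, Prod.ext_iff, eq_comm]

end SparseMulVec

/-- The structure tensor of the matrix-vector product
`ℂ^{m×n}_Ω × ℂ^n → ℂ^m`, `(A, x) ↦ Ax`, for matrices with sparsity pattern `Ω` has both rank
and border rank equal to `#Ω`. -/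
theorem tensorRank_and_borderRank_sparse_mulVec (m n : ℕ) (Ω : Finset (Fin m × Fin n)) :
    tensorRank ℂ (fun (A : sparseMatrixSpace m n Ω) (x : Fin n → ℂ) =>
        (A : Matrix (Fin m) (Fin n) ℂ).mulVec x) = Ω.card ∧
    borderRank ℂ (fun (A : sparseMatrixSpace m n Ω) (x : Fin n → ℂ) =>
        (A : Matrix (Fin m) (Fin n) ℂ).mulVec x) = Ω.card := by
  have hupper := hasTensorRankLE_sparse_mulVec (Ω := Ω)
  have hdet := congrArg det (evalMatrix_sparse_mulVec_eq_one (Ω := Ω))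
  rw [det_one] at hdet
  have hlower := card_le_borderRank_of_det_evalMatrix_ne_zero
    (fun p => continuous_apply p.1.1) hupper (ne_zero_of_eq_one hdet)
  rw [Fintype.card_coe] at hlower
  have hborder_le_rank := borderRank_le_tensorRank hupper
  have hrank_le := hupper.tensorRank_le
  omega
end

section
/- Let Circ_n(ℂ) be the space of n×n complex circulant matrices, let β_c : Circ_n(ℂ) × ℂ^n → ℂ^n, (Circ(x), y) ↦ Circ(x)y, be the circulant matrix-vector product with structure tensor μ_c, and let μ_C be the structure tensor of the algebra Circ_n(ℂ) (circulant matrices are closed under matrix multiplication). Then rank(μ_c) = rank(μ_C) = n. -/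
open Filter Topology

/-- Forming the circulant matrix of a vector, as a linear map. -/
noncomputable def circulantLin (n : ℕ) : (Fin n → ℂ) →ₗ[ℂ] Matrix (Fin n) (Fin n) ℂ where
  toFun v := Matrix.circulant v
  map_add' v w := by ext i j; simp [Matrix.circulant_apply]
  map_smul' c v := by ext i j; simp [Matrix.circulant_apply]

/-- The space `Circ_n(ℂ)` of `n × n` complex circulant matrices. -/
noncomputable def circulantSpace (n : ℕ) : Submodule ℂ (Matrix (Fin n) (Fin n) ℂ) :=
  LinearMap.range (circulantLin n)

/-- Circulant matrices are closed under matrix multiplication. -/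
theorem mul_mem_circulantSpace {n : ℕ} (A B : circulantSpace n) :
    (A : Matrix (Fin n) (Fin n) ℂ) * (B : Matrix (Fin n) (Fin n) ℂ) ∈ circulantSpace n := by
  obtain ⟨v, hv⟩ := A.2
  obtain ⟨w, hw⟩ := B.2
  refine ⟨Matrix.mulVec (Matrix.circulant v) w, ?_⟩
  show Matrix.circulant (Matrix.mulVec (Matrix.circulant v) w) = _
  rw [← Matrix.Fin.circulant_mul]
  have hv' : Matrix.circulant v = (A : Matrix (Fin n) (Fin n) ℂ) := hv
  have hw' : Matrix.circulant w = (B : Matrix (Fin n) (Fin n) ℂ) := hw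
  rw [hv', hw']

/-!
The discrete Fourier transform on `ZMod n` turns the circulant product `Circ(x) y`, a cyclic
convolution, into the pointwise product of the transforms; hence `μ_c`, and with it `μ_C`
(as `Circ(x) Circ(y) = Circ(Circ(x) y)`), is a linear restriction of the diagonal tensor of
rank `n`. Conversely the identity matrix is circulant, so both bilinear maps are onto an
`n`-dimensional space, and the terms of any decomposition must span that space.
-/

open Matrix
open scoped ZMod

section TensorRank

variable {𝕜 U V W : Type*} [Field 𝕜] [AddCommGroup U] [Module 𝕜 U] [AddCommGroup V] [Module 𝕜 V]
  [AddCommGroup W] [Module 𝕜 W]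

theorem hasTensorRankLE_of_eq_mul {ι : Type*} [Fintype ι] {β : U → V → W}
    (a : U →ₗ[𝕜] ι → 𝕜) (b : V →ₗ[𝕜] ι → 𝕜) (L : (ι → 𝕜) →ₗ[𝕜] W)
    (h : ∀ u v, β u v = L (a u * b v)) : HasTensorRankLE 𝕜 β (Fintype.card ι) := by
  classical
  let e := (Fintype.equivFin ι).symm
  refine ⟨fun i => LinearMap.proj (e i) ∘ₗ a, fun i => LinearMap.proj (e i) ∘ₗ b,
    fun i => L (Pi.single (e i) 1), fun u v => ?_⟩
  conv_lhs => rw [h, pi_eq_sum_univ' (a u * b v), map_sum]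
  simp only [map_smul, LinearMap.comp_apply, LinearMap.proj_apply, Pi.mul_apply]
  exact (e.sum_comp _).symm

theorem HasTensorRankLE.comp {U' V' W' : Type*} [AddCommGroup U'] [Module 𝕜 U']
    [AddCommGroup V'] [Module 𝕜 V'] [AddCommGroup W'] [Module 𝕜 W'] {β : U → V → W} {r : ℕ}
    (h : HasTensorRankLE 𝕜 β r) (a : U' →ₗ[𝕜] U) (b : V' →ₗ[𝕜] V) (L : W →ₗ[𝕜] W') :
    HasTensorRankLE 𝕜 (fun u v => L (β (a u) (b v))) r := by
  obtain ⟨f, g, w, hβ⟩ := h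
  exact ⟨fun i => f i ∘ₗ a, fun i => g i ∘ₗ b, fun i => L (w i), fun u v => by simp [hβ]⟩

theorem finrank_le_of_hasTensorRankLE {β : U → V → W} {r : ℕ}
    (hβ : ∀ w, ∃ u v, β u v = w) (h : HasTensorRankLE 𝕜 β r) : Module.finrank 𝕜 W ≤ r := by
  obtain ⟨f, g, w, hd⟩ := h
  have hspan : Submodule.span 𝕜 (Set.range w) = ⊤ := by
    refine eq_top_iff.2 fun x _ => ?_
    obtain ⟨u, v, rfl⟩ := hβ x
    rw [hd]
    exact Submodule.sum_mem _ fun i _ => Submodule.smul_mem _ _ (Submodule.subset_span ⟨i, rfl⟩)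
  calc Module.finrank 𝕜 W = (Set.range w).finrank 𝕜 := by rw [Set.finrank, hspan, finrank_top]
    _ ≤ r := (finrank_range_le_card w).trans_eq (Fintype.card_fin r)

theorem tensorRank_eq_of_surjective {β : U → V → W} {r : ℕ} (hβ : ∀ w, ∃ u v, β u v = w)
    (h : HasTensorRankLE 𝕜 β r) (hr : Module.finrank 𝕜 W = r) : tensorRank 𝕜 β = r :=
  le_antisymm (Nat.sInf_le h) (le_csInf ⟨r, h⟩ fun _ => hr ▸ finrank_le_of_hasTensorRankLE hβ)

end TensorRank

theorem ZMod.dft_circulant_mulVec {N : ℕ} [NeZero N] (f g : ZMod N → ℂ) :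
    𝓕 (circulant f *ᵥ g) = 𝓕 f * 𝓕 g := by
  ext k
  simp only [ZMod.dft_apply, Pi.mul_apply, mulVec, dotProduct, circulant_apply, smul_eq_mul,
    Finset.mul_sum, Finset.sum_mul]
  rw [Finset.sum_comm]
  refine Finset.sum_congr rfl fun j _ => (Fintype.sum_equiv (Equiv.subRight j) _ _ fun i => ?_)
  rw [Equiv.subRight_apply, show -(i * k) = -((i - j) * k) + -(j * k) by ring,
    AddChar.map_add_eq_mul]
  ring

theorem hasTensorRankLE_zmod_circulant_mulVec (N : ℕ) [NeZero N] :
    HasTensorRankLE ℂ (fun f g : ZMod N → ℂ => circulant f *ᵥ g) N := by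
  simpa using hasTensorRankLE_of_eq_mul ZMod.dft.toLinearMap ZMod.dft.toLinearMap
    ZMod.dft.symm.toLinearMap fun f g => by simp [← ZMod.dft_circulant_mulVec]

theorem Matrix.circulant_comp_addEquiv_mulVec {R G H : Type*} [NonUnitalNonAssocSemiring R]
    [AddGroup G] [AddGroup H] [Fintype G] [Fintype H] (e : G ≃+ H) (v w : H → R) :
    circulant (v ∘ e) *ᵥ (w ∘ e) = (circulant v *ᵥ w) ∘ e := by
  ext i
  simp only [mulVec, dotProduct, circulant_apply, Function.comp_apply, map_sub]
  exact e.toEquiv.sum_comp (fun j => v (e i - j) * w j)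

theorem hasTensorRankLE_circulant_mulVec (n : ℕ) :
    HasTensorRankLE ℂ (fun v w : Fin n → ℂ => circulant v *ᵥ w) n := by
  rcases eq_zero_or_neZero n with rfl | _
  · exact ⟨Fin.elim0, Fin.elim0, Fin.elim0, fun _ _ => Subsingleton.elim _ _⟩
  let e : Fin n ≃+ ZMod n := (ZMod.finEquiv n).toAddEquiv
  convert (hasTensorRankLE_zmod_circulant_mulVec n).comp (LinearMap.funLeft ℂ ℂ e.symm)
    (LinearMap.funLeft ℂ ℂ e.symm) (LinearMap.funLeft ℂ ℂ e) using 3 with v w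
  change _ = (circulant (v ∘ e.symm) *ᵥ (w ∘ e.symm)) ∘ e
  rw [← circulant_comp_addEquiv_mulVec]
  simp [Function.comp_def]

noncomputable def circulantEquiv (n : ℕ) : (Fin n → ℂ) ≃ₗ[ℂ] circulantSpace n :=
  LinearEquiv.ofInjective (circulantLin n) (Fin.circulant_injective n)

theorem circulant_circulantEquiv_symm {n : ℕ} (A : circulantSpace n) :
    circulant ((circulantEquiv n).symm A) = A :=
  congrArg Subtype.val ((circulantEquiv n).apply_symm_apply A)

theorem finrank_circulantSpace (n : ℕ) : Module.finrank ℂ (circulantSpace n) = n :=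
  (circulantEquiv n).finrank_eq.symm.trans (Module.finrank_fin_fun ℂ)

theorem one_mem_circulantSpace (n : ℕ) : (1 : Matrix (Fin n) (Fin n) ℂ) ∈ circulantSpace n := by
  rcases eq_zero_or_neZero n with rfl | _
  · exact ⟨0, Subsingleton.elim _ _⟩
  · exact ⟨Pi.single 0 1, circulant_single_one ℂ (Fin n)⟩

theorem hasTensorRankLE_circulantSpace_mulVec (n : ℕ) :
    HasTensorRankLE ℂ (fun (A : circulantSpace n) (y : Fin n → ℂ) =>
      (A : Matrix (Fin n) (Fin n) ℂ) *ᵥ y) n := by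
  simpa only [LinearEquiv.coe_coe, LinearMap.id_apply, circulant_circulantEquiv_symm] using
    (hasTensorRankLE_circulant_mulVec n).comp (circulantEquiv n).symm.toLinearMap LinearMap.id
      LinearMap.id

theorem hasTensorRankLE_circulantSpace_mul (n : ℕ) :
    HasTensorRankLE ℂ (fun (A B : circulantSpace n) =>
      (⟨(A : Matrix (Fin n) (Fin n) ℂ) * (B : Matrix (Fin n) (Fin n) ℂ),
        mul_mem_circulantSpace A B⟩ : circulantSpace n)) n := by
  convert (hasTensorRankLE_circulantSpace_mulVec n).comp LinearMap.id
    (circulantEquiv n).symm.toLinearMap (circulantEquiv n).toLinearMap using 3 with A B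
  refine Subtype.ext ?_
  change (A : Matrix (Fin n) (Fin n) ℂ) * (B : Matrix (Fin n) (Fin n) ℂ) =
    circulant ((A : Matrix (Fin n) (Fin n) ℂ) *ᵥ (circulantEquiv n).symm B)
  conv_rhs => rw [← circulant_circulantEquiv_symm A, ← Fin.circulant_mul,
    circulant_circulantEquiv_symm, circulant_circulantEquiv_symm]

/-- The structure tensor `μ_c` of the circulant matrix-vector product
`Circ_n(ℂ) × ℂ^n → ℂ^n` and the structure tensor `μ_C` of the algebra `Circ_n(ℂ)` both have
rank `n`. -/
theorem tensorRank_circulant (n : ℕ) :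
    tensorRank ℂ (fun (A : circulantSpace n) (y : Fin n → ℂ) =>
        (A : Matrix (Fin n) (Fin n) ℂ).mulVec y) = n ∧
    tensorRank ℂ (fun (A B : circulantSpace n) =>
        (⟨(A : Matrix (Fin n) (Fin n) ℂ) * (B : Matrix (Fin n) (Fin n) ℂ),
          mul_mem_circulantSpace A B⟩ : circulantSpace n)) = n := by
  let I : circulantSpace n := ⟨1, one_mem_circulantSpace n⟩
  exact ⟨tensorRank_eq_of_surjective (fun y => ⟨I, y, one_mulVec y⟩)
      (hasTensorRankLE_circulantSpace_mulVec n) (Module.finrank_fin_fun ℂ),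
    tensorRank_eq_of_surjective (fun B => ⟨I, B, Subtype.ext (one_mul _)⟩)
      (hasTensorRankLE_circulantSpace_mul n) (finrank_circulantSpace n)⟩
end

section
/- Let Circ_{2,−1}(ℝ) = {[[a, b], [−b, a]] : a, b ∈ ℝ} be the space of 2×2 real skew-circulant matrices and let β : Circ_{2,−1}(ℝ) × ℝ² → ℝ², (X, v) ↦ Xv. Then the rank of the structure tensor of β, as a tensor over ℝ, equals 3. -/
/-!
The skew-circulant product `(X, v) ↦ Xv` has no zero divisors, since `det X = a² + b²`. A bilinear
map `β : U × V → W` without zero divisors has rank at least `dim U + dim V - 1`: given fewer terms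
`f i ⊗ g i ⊗ w i`, some `u ≠ 0` is killed by the first `dim U - 1` of the `f i` and some `v ≠ 0` by
the remaining `g i`, so `β u v = 0`. The matching upper bound `3` is Gauss's trick.
-/

open Filter Topology

/-- The space `Circ_{2,−1}(ℝ)` of `2 × 2` real skew-circulant matrices
`[[a, b], [−b, a]]`. -/
noncomputable def skewCirculant2Space : Submodule ℝ (Matrix (Fin 2) (Fin 2) ℝ) where
  carrier := {A | A 1 1 = A 0 0 ∧ A 1 0 = -A 0 1}
  add_mem' := by
    rintro A B ⟨hA1, hA2⟩ ⟨hB1, hB2⟩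
    constructor
    · simp [Matrix.add_apply, hA1, hB1]
    · simp [Matrix.add_apply, hA2, hB2]; ring
  zero_mem' := by simp
  smul_mem' := by
    rintro c A ⟨h1, h2⟩
    constructor
    · simp [Matrix.smul_apply, h1]
    · simp [Matrix.smul_apply, h2]

open Module

section NonsingularBilinear

variable {𝕜 U V W : Type*} [Field 𝕜] [AddCommGroup U] [Module 𝕜 U] [AddCommGroup V]
  [Module 𝕜 V] [AddCommGroup W] [Module 𝕜 W] {β : U → V → W}

theorem exists_ne_zero_forall_apply_eq_zero [FiniteDimensional 𝕜 U] {s : ℕ}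
    (f : Fin s → U →ₗ[𝕜] 𝕜) (hs : s < finrank 𝕜 U) : ∃ u ≠ 0, ∀ i, f i u = 0 := by
  have hker : LinearMap.ker (LinearMap.pi f) ≠ ⊥ :=
    LinearMap.ker_ne_bot_of_finrank_lt (by simpa using hs)
  obtain ⟨u, hu, hu0⟩ := Submodule.exists_mem_ne_zero_of_ne_bot hker
  exact ⟨u, hu0, fun i => congrFun (LinearMap.mem_ker.mp hu) i⟩

theorem HasTensorRankLE.exists_apply_eq_zero [FiniteDimensional 𝕜 U] [FiniteDimensional 𝕜 V]
    {s t : ℕ} (h : HasTensorRankLE 𝕜 β (s + t)) (hs : s < finrank 𝕜 U)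
    (ht : t < finrank 𝕜 V) : ∃ u ≠ 0, ∃ v ≠ 0, β u v = 0 := by
  obtain ⟨f, g, w, hβ⟩ := h
  obtain ⟨u, hu0, hu⟩ := exists_ne_zero_forall_apply_eq_zero (fun i => f (Fin.castAdd t i)) hs
  obtain ⟨v, hv0, hv⟩ := exists_ne_zero_forall_apply_eq_zero (fun i => g (Fin.natAdd s i)) ht
  exact ⟨u, hu0, v, hv0, by simp [hβ, Fin.sum_univ_add, hu, hv]⟩

theorem HasTensorRankLE.finrank_add_finrank_le [FiniteDimensional 𝕜 U] [FiniteDimensional 𝕜 V]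
    {r : ℕ} (h : HasTensorRankLE 𝕜 β r) (hβ : ∀ u v, β u v = 0 → u = 0 ∨ v = 0)
    (hU : 0 < finrank 𝕜 U) (hV : 0 < finrank 𝕜 V) : finrank 𝕜 U + finrank 𝕜 V ≤ r + 1 := by
  by_contra! hr
  obtain ⟨s, t, rfl, hs, ht⟩ : ∃ s t, r = s + t ∧ s < finrank 𝕜 U ∧ t < finrank 𝕜 V :=
    ⟨min r (finrank 𝕜 U - 1), r - min r (finrank 𝕜 U - 1), by omega, by omega, by omega⟩
  obtain ⟨u, hu0, v, hv0, huv⟩ := h.exists_apply_eq_zero hs ht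
  exact (hβ u v huv).elim hu0 hv0

end NonsingularBilinear

namespace skewCirculant2Space

theorem two_le_finrank : 2 ≤ finrank ℝ skewCirculant2Space := by
  let I : skewCirculant2Space := ⟨!![1, 0; 0, 1], by constructor <;> norm_num⟩
  let J : skewCirculant2Space := ⟨!![0, 1; -1, 0], by constructor <;> norm_num⟩
  have hIJ : LinearIndependent ℝ ![I, J] := by
    refine LinearIndependent.pair_iff.mpr fun s t hst => ?_
    have h := congrArg Subtype.val hst
    exact ⟨by simpa [I, J] using congrFun (congrFun h 0) 0,
      by simpa [I, J] using congrFun (congrFun h 0) 1⟩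
  simpa using hIJ.fintype_card_le_finrank

theorem mulVec_eq (A : skewCirculant2Space) (v : Fin 2 → ℝ) :
    (A : Matrix (Fin 2) (Fin 2) ℝ).mulVec v =
      ![(A : Matrix (Fin 2) (Fin 2) ℝ) 0 0 * v 0 + (A : Matrix (Fin 2) (Fin 2) ℝ) 0 1 * v 1,
        -(A : Matrix (Fin 2) (Fin 2) ℝ) 0 1 * v 0 + (A : Matrix (Fin 2) (Fin 2) ℝ) 0 0 * v 1] := by
  obtain ⟨h11, h10⟩ := A.2
  ext i
  fin_cases i <;> simp [Matrix.mulVec, dotProduct, Fin.sum_univ_two, h11, h10]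

theorem eq_zero_or_eq_zero_of_mulVec_eq_zero {A : skewCirculant2Space} {v : Fin 2 → ℝ}
    (h : (A : Matrix (Fin 2) (Fin 2) ℝ).mulVec v = 0) : A = 0 ∨ v = 0 := by
  obtain ⟨h11, h10⟩ := A.2
  set a := (A : Matrix (Fin 2) (Fin 2) ℝ) 0 0
  set b := (A : Matrix (Fin 2) (Fin 2) ℝ) 0 1
  rw [mulVec_eq] at h
  have e0 : a * v 0 + b * v 1 = 0 := by simpa using congrFun h 0
  have e1 : -b * v 0 + a * v 1 = 0 := by simpa using congrFun h 1
  by_cases hab : a ^ 2 + b ^ 2 = 0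
  · have ha : a = 0 := by nlinarith
    have hb : b = 0 := by nlinarith
    left
    ext i j
    fin_cases i <;> fin_cases j <;> simp [h11, h10, ha, hb, a, b]
  · right
    have hx : (a ^ 2 + b ^ 2) * v 0 = 0 := by linear_combination a * e0 - b * e1
    have hy : (a ^ 2 + b ^ 2) * v 1 = 0 := by linear_combination b * e0 + a * e1
    ext i
    fin_cases i
    · exact (mul_eq_zero.mp hx).resolve_left hab
    · exact (mul_eq_zero.mp hy).resolve_left hab

/-- `Xv` is the complex product `(a - b i) (x + y i)`, computed with the three real products
`a (x + y)`, `(a - b) y` and `(a + b) x`. -/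
theorem hasTensorRankLE_mulVec_three :
    HasTensorRankLE ℝ (fun (A : skewCirculant2Space) (v : Fin 2 → ℝ) =>
        (A : Matrix (Fin 2) (Fin 2) ℝ).mulVec v) 3 := by
  let a : skewCirculant2Space →ₗ[ℝ] ℝ := Matrix.entryLinearMap ℝ ℝ 0 0 ∘ₗ Submodule.subtype _
  let b : skewCirculant2Space →ₗ[ℝ] ℝ := Matrix.entryLinearMap ℝ ℝ 0 1 ∘ₗ Submodule.subtype _
  let x : (Fin 2 → ℝ) →ₗ[ℝ] ℝ := LinearMap.proj 0
  let y : (Fin 2 → ℝ) →ₗ[ℝ] ℝ := LinearMap.proj 1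
  refine ⟨![a, a - b, a + b], ![x + y, y, x], ![![1, 1], ![-1, 0], ![0, -1]], fun A v => ?_⟩
  dsimp only
  rw [mulVec_eq]
  ext i
  fin_cases i <;>
    simp only [Fin.sum_univ_three, Finset.sum_apply, Pi.smul_apply, smul_eq_mul, a, b, x, y,
      LinearMap.comp_apply, LinearMap.add_apply, LinearMap.sub_apply, LinearMap.proj_apply,
      Matrix.entryLinearMap_apply, Submodule.coe_subtype, Fin.zero_eta, Fin.mk_one, Matrix.cons_val] <;>
    ring

end skewCirculant2Space

/-- The structure tensor of the `2 × 2` real skew-circulant matrix-vector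
product `Circ_{2,−1}(ℝ) × ℝ² → ℝ²`, `(X, v) ↦ Xv`, has rank `3` over `ℝ`. -/
theorem tensorRank_skewCirculant2 :
    tensorRank ℝ (fun (A : skewCirculant2Space) (v : Fin 2 → ℝ) =>
        (A : Matrix (Fin 2) (Fin 2) ℝ).mulVec v) = 3 := by
  refine IsLeast.csInf_eq ⟨skewCirculant2Space.hasTensorRankLE_mulVec_three, fun r hr => ?_⟩
  have hU := skewCirculant2Space.two_le_finrank
  have hbound := hr.finrank_add_finrank_le
    (fun _ _ => skewCirculant2Space.eq_zero_or_eq_zero_of_mulVec_eq_zero) (by omega)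
    (by simp)
  rw [finrank_fin_fun] at hbound
  omega
end

section
/- Let μ_ℂ ∈ ℂ* ⊗_ℝ ℂ* ⊗_ℝ ℂ be the structure tensor of ℂ regarded as a 2-dimensional ℝ-algebra, i.e., the structure tensor of the ℝ-bilinear multiplication map ℂ × ℂ → ℂ, (a+bi, c+di) ↦ (ac−bd) + (ad+bc)i. Then both the rank and the border rank of μ_ℂ over ℝ equal 3. -/
open Filter Topology

/-!
Restricting a bilinear map `U × V → ℂ` to two vectors on each side gives a pair `(A, B)` of
real `2 × 2` matrices (real and imaginary parts); the discriminant of the binary quadratic form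
`det (x A + y B)` is a polynomial, hence continuous, function of the restriction. For a sum of
two rank-one terms, `x A + y B = F diag(ℓ₀, ℓ₁) Gᵀ` with real linear forms `ℓᵢ`, so the
determinant splits over `ℝ` and the discriminant is a square; by continuity it stays
nonnegative in the limit. For complex multiplication on the basis `(1, i)` the form is
`x² + y²`, of discriminant `-4`. Gauss's trick
`(a + bi)(c + di) = ac (1 - i) - bd (1 + i) + (a + b)(c + d) i` gives three terms.
-/

open Complex

section General

variable {𝕜 : Type*} [Field 𝕜] {U V W : Type*} [AddCommGroup U] [Module 𝕜 U]
  [AddCommGroup V] [Module 𝕜 V] [AddCommGroup W] [Module 𝕜 W] {β : U → V → W}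

lemma HasTensorRankLE.succ {r : ℕ} (h : HasTensorRankLE 𝕜 β r) :
    HasTensorRankLE 𝕜 β (r + 1) := by
  obtain ⟨f, g, w, hβ⟩ := h
  refine ⟨Fin.snoc f 0, Fin.snoc g 0, Fin.snoc w 0, fun u v => ?_⟩
  simp [hβ u v, Fin.sum_univ_castSucc]

lemma HasTensorRankLE.mono {r r' : ℕ} (h : HasTensorRankLE 𝕜 β r) (hr : r ≤ r') :
    HasTensorRankLE 𝕜 β r' := by
  induction r', hr using Nat.le_induction with
  | base => exact h
  | succ _ _ ih => exact ih.succ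

lemma tensorRank_eq_succ_iff {r : ℕ} :
    tensorRank 𝕜 β = r + 1 ↔ HasTensorRankLE 𝕜 β (r + 1) ∧ ¬ HasTensorRankLE 𝕜 β r :=
  Nat.sInf_upward_closed_eq_succ_iff
    (fun _ _ hle (h : HasTensorRankLE 𝕜 β _) => h.mono hle) r

variable (𝕜) in
def HasBorderRankLE [TopologicalSpace W] (β : U → V → W) (r : ℕ) : Prop :=
  ∃ s : ℕ → U → V → W, (∀ m, HasTensorRankLE 𝕜 (s m) r) ∧
    ∀ u v, Tendsto (fun m => s m u v) atTop (𝓝 (β u v))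

variable [TopologicalSpace W]

lemma HasTensorRankLE.hasBorderRankLE {r : ℕ} (h : HasTensorRankLE 𝕜 β r) :
    HasBorderRankLE 𝕜 β r :=
  ⟨fun _ => β, fun _ => h, fun _ _ => tendsto_const_nhds⟩

lemma HasBorderRankLE.mono {r r' : ℕ} (h : HasBorderRankLE 𝕜 β r) (hr : r ≤ r') :
    HasBorderRankLE 𝕜 β r' :=
  let ⟨s, hs, hlim⟩ := h
  ⟨s, fun m => (hs m).mono hr, hlim⟩

lemma borderRank_eq_succ_iff {r : ℕ} :
    borderRank 𝕜 β = r + 1 ↔ HasBorderRankLE 𝕜 β (r + 1) ∧ ¬ HasBorderRankLE 𝕜 β r :=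
  Nat.sInf_upward_closed_eq_succ_iff
    (fun _ _ hle (h : HasBorderRankLE 𝕜 β _) => h.mono hle) r

end General

section PencilDiscrim

noncomputable def pencilDiscrim (M : Fin 2 → Fin 2 → ℂ) : ℝ :=
  discrim ((M 0 0).re * (M 1 1).re - (M 0 1).re * (M 1 0).re)
    ((M 0 0).re * (M 1 1).im + (M 0 0).im * (M 1 1).re
      - (M 0 1).re * (M 1 0).im - (M 0 1).im * (M 1 0).re)
    ((M 0 0).im * (M 1 1).im - (M 0 1).im * (M 1 0).im)

lemma continuous_pencilDiscrim : Continuous pencilDiscrim := by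
  unfold pencilDiscrim discrim
  fun_prop

lemma pencilDiscrim_add_smul (a b c d : Fin 2 → ℝ) (w₀ w₁ : ℂ) :
    pencilDiscrim (fun j k => (a j * b k) • w₀ + (c j * d k) • w₁) =
      ((a 0 * c 1 - a 1 * c 0) * (b 0 * d 1 - b 1 * d 0) *
        (w₀.re * w₁.im - w₀.im * w₁.re)) ^ 2 := by
  simp only [pencilDiscrim, discrim, add_re, add_im, smul_re, smul_im, smul_eq_mul]
  ring

variable {U V : Type*} [AddCommGroup U] [Module ℝ U] [AddCommGroup V] [Module ℝ V]
  {β : U → V → ℂ}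

lemma HasTensorRankLE.pencilDiscrim_nonneg (h : HasTensorRankLE ℝ β 2) (u : Fin 2 → U)
    (v : Fin 2 → V) : 0 ≤ pencilDiscrim fun j k => β (u j) (v k) := by
  obtain ⟨f, g, w, hβ⟩ := h
  simp only [hβ, Fin.sum_univ_two]
  rw [pencilDiscrim_add_smul (fun j => f 0 (u j)) (fun k => g 0 (v k)) (fun j => f 1 (u j))
    (fun k => g 1 (v k))]
  positivity

lemma HasBorderRankLE.pencilDiscrim_nonneg (h : HasBorderRankLE ℝ β 2) (u : Fin 2 → U)
    (v : Fin 2 → V) : 0 ≤ pencilDiscrim fun j k => β (u j) (v k) := by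
  obtain ⟨s, hs, hlim⟩ := h
  have hlim' : Tendsto (fun m j k => s m (u j) (v k)) atTop (𝓝 fun j k => β (u j) (v k)) :=
    tendsto_pi_nhds.2 fun j => tendsto_pi_nhds.2 fun k => hlim (u j) (v k)
  exact ge_of_tendsto' ((continuous_pencilDiscrim.tendsto _).comp hlim')
    fun m => (hs m).pencilDiscrim_nonneg u v

end PencilDiscrim

lemma pencilDiscrim_complexMul :
    pencilDiscrim (fun j k => ![1, I] j * ![1, I] k) = -4 := by
  norm_num [pencilDiscrim, discrim]

lemma hasTensorRankLE_complexMul_three : HasTensorRankLE ℝ (fun z w : ℂ => z * w) 3 := by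
  refine ⟨![reLm, imLm, reLm + imLm], ![reLm, imLm, reLm + imLm], ![1 - I, -1 - I, I],
    fun z w => ?_⟩
  apply Complex.ext <;> simp [Fin.sum_univ_three] <;> ring

/-- The structure tensor `μ_ℂ` of `ℂ` regarded as a 2-dimensional
`ℝ`-algebra, i.e. of the `ℝ`-bilinear multiplication map `ℂ × ℂ → ℂ`, has rank `3` and border
rank `3` over `ℝ`. -/
theorem tensorRank_and_borderRank_complexMul :
    tensorRank ℝ (fun z w : ℂ => z * w) = 3 ∧
    borderRank ℝ (fun z w : ℂ => z * w) = 3 := by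
  have hle : HasTensorRankLE ℝ (fun z w : ℂ => z * w) 3 := hasTensorRankLE_complexMul_three
  have hnot_two : ¬ HasBorderRankLE ℝ (fun z w : ℂ => z * w) 2 := fun h => by
    have := h.pencilDiscrim_nonneg ![1, I] ![1, I]
    rw [pencilDiscrim_complexMul] at this
    norm_num at this
  exact ⟨tensorRank_eq_succ_iff.2 ⟨hle, fun h => hnot_two h.hasBorderRankLE⟩,
    borderRank_eq_succ_iff.2 ⟨hle.hasBorderRankLE, hnot_two⟩⟩
end
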